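/- For all j, k ∈ F the square of the phase factor satisfies (s_{j,k})² = (-1)^{(j*k*k)_0}. -/

import Mathlib

variable {n : ℕ} [NeZero n] {F : Type*} [Field F] [Fintype F] [DecidableEq F]
  [Algebra (ZMod 2) F]

/-- `ν(x) = ∑_{i<n} (x_i).val * 2^i`. -/
noncomputable def nu (b : Module.Basis (Fin n) (ZMod 2) F) (x : F) : ℕ :=
  ∑ i : Fin n, ((b.repr x) i).val * 2 ^ i.val

/-- The phase factor `s_{j,k} := ∏_{0 ≤ r,t < n} I^{ν(j * (k_r • b r) * (k_t • b t))}`. -/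
noncomputable def sFactor (b : Module.Basis (Fin n) (ZMod 2) F) (j k : F) : ℂ :=
  ∏ r : Fin n, ∏ t : Fin n,
    Complex.I ^ nu b (j * ((b.repr k) r • b r) * ((b.repr k) t • b t))

/-- The sign character `χ(x) = (-1)^{x_0}`. -/
noncomputable def chi (b : Module.Basis (Fin n) (ZMod 2) F) (x : F) : ℂ :=
  (-1 : ℂ) ^ ((b.repr x) 0).val

lemma chi_zero (b : Module.Basis (Fin n) (ZMod 2) F) : chi b 0 = 1 := by
  simp [chi]

lemma chi_add (b : Module.Basis (Fin n) (ZMod 2) F) (x y : F) :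
    chi b (x + y) = chi b x * chi b y := by
  have h : (b.repr (x + y)) 0 = b.repr x 0 + b.repr y 0 := by simp
  rw [chi, chi, chi, h, ZMod.val_add, ← pow_add, ← neg_one_pow_eq_pow_mod_two]

lemma chi_sum (b : Module.Basis (Fin n) (ZMod 2) F) {ι : Type*} (s : Finset ι) (f : ι → F) :
    chi b (∑ i ∈ s, f i) = ∏ i ∈ s, chi b (f i) := by
  classical
  induction s using Finset.cons_induction with
  | empty => simp [chi_zero]
  | cons a s ha ih => rw [Finset.sum_cons, Finset.prod_cons, chi_add, ih]

lemma chi_nu (b : Module.Basis (Fin n) (ZMod 2) F) (x : F) :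
    (-1 : ℂ) ^ (nu b x) = chi b x := by
  rw [neg_one_pow_eq_pow_mod_two, chi]
  congr 1
  have hsplit : nu b x = ((b.repr x) 0).val * 2 ^ (0 : Fin n).val +
      ∑ i ∈ Finset.univ.erase 0, ((b.repr x) i).val * 2 ^ i.val := by
    rw [nu]; exact (Finset.add_sum_erase _ _ (Finset.mem_univ 0)).symm
  have h2 : 2 ∣ ∑ i ∈ Finset.univ.erase 0, ((b.repr x) i).val * 2 ^ i.val := by
    refine Finset.dvd_sum fun i hi => dvd_mul_of_dvd_right (dvd_pow_self 2 ?_) _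
    have hne : i ≠ 0 := (Finset.mem_erase.mp hi).1
    intro hv
    exact hne (Fin.val_injective (by simpa using hv))
  obtain ⟨m, hm⟩ := h2
  rw [hsplit, hm]
  simp [Nat.add_mul_mod_self_left, Nat.mod_eq_of_lt (ZMod.val_lt _)]

/-- For all `j, k ∈ F` the square of the phase factor satisfies
`(s_{j,k})² = (-1)^{(j*k*k)_0}`. -/
theorem stmt_4 (hF : Fintype.card F = 2 ^ n) (b : Module.Basis (Fin n) (ZMod 2) F) (j k : F) :
    (sFactor b j k) ^ 2 = (-1 : ℂ) ^ ((b.repr (j * k * k)) 0).val := by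
  have hsum : ∑ r : Fin n, ∑ t : Fin n,
      j * ((b.repr k) r • b r) * ((b.repr k) t • b t) = j * k * k := by
    simp_rw [← Finset.mul_sum, b.sum_repr k, mul_right_comm _ k, ← Finset.sum_mul,
      ← Finset.mul_sum, b.sum_repr k]
  calc (sFactor b j k) ^ 2
      = ∏ r : Fin n, ∏ t : Fin n,
          (Complex.I ^ nu b (j * ((b.repr k) r • b r) * ((b.repr k) t • b t))) ^ 2 := by
        rw [sFactor, ← Finset.prod_pow]
        exact Finset.prod_congr rfl fun r _ => (Finset.prod_pow _ _ _).symm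
    _ = ∏ r : Fin n, ∏ t : Fin n,
          chi b (j * ((b.repr k) r • b r) * ((b.repr k) t • b t)) := by
        refine Finset.prod_congr rfl fun r _ => Finset.prod_congr rfl fun t _ => ?_
        rw [← pow_mul, mul_comm, pow_mul, Complex.I_sq, chi_nu]
    _ = chi b (j * k * k) := by rw [← hsum, chi_sum]; exact Finset.prod_congr rfl fun r _ => (chi_sum ..).symm
    _ = (-1 : ℂ) ^ ((b.repr (j * k * k)) 0).val := rfl
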